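/- arXiv:0901.1061 — 2 statements merged into one kernel-verified Lean document; each statement's English description precedes it below -/
import Mathlib

section
/- (Dubois-Violette–Popov) Let V = ℂ^n, N ≥ 2 an integer, and R ⊆ V^{⊗N} a linear subspace. Suppose that for every integer m ≥ 1 the Koszul complex K(A)_m of total degree m of the N-homogeneous algebra A = A(V,R) is exact at every position (including surjectivity of A_{m-1} ⊗ V → A_m at position 0). Then the identity (∑_{k≥0} dim_ℂ(A_k) t^k) · (∑_{ℓ≥0} (-1)^ℓ dim_ℂ(W_{ν_N(ℓ)}) t^{ν_N(ℓ)}) = 1 holds in the formal power series ring ℤ[[t]]. -/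
open scoped TensorProduct

/-- The `k`-th tensor power `V^{⊗k}` of `V = ℂ^n`, realized concretely as the space
of `ℂ`-valued functions on words of length `k` in the letters `{1,…,n}`. -/
abbrev TP (n k : ℕ) := (Fin k → Fin n) → ℂ

/-- The concatenation (tensor) product `V^{⊗k} × V^{⊗l} → V^{⊗m}` for `k + l = m`. -/
noncomputable def mulT {n k l m : ℕ} (h : k + l = m) (f : TP n k) (g : TP n l) : TP n m :=
  fun w => f (fun i => w (Fin.cast h (Fin.castAdd l i))) *
           g (fun i => w (Fin.cast h (Fin.natAdd k i)))

/-- The slice map `V^{⊗m} → V^{⊗N}` extracting the coefficient function of the middle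
block, the prefix word `p` (length `a`) and suffix word `s` (length `b`) being fixed. -/
noncomputable def sliceMap (n N : ℕ) {a b m : ℕ} (h : a + N + b = m)
    (p : Fin a → Fin n) (s : Fin b → Fin n) : TP n m →ₗ[ℂ] TP n N :=
  LinearMap.funLeft ℂ ℂ (fun u => (Fin.append (Fin.append p u) s) ∘ Fin.cast h.symm)

/-- The subspace `V^{⊗a} ⊗ R ⊗ V^{⊗b}` of `V^{⊗m}` (for `a + N + b = m`), described as
the set of tensors all of whose middle slices lie in `R ⊆ V^{⊗N}`. -/
noncomputable def midSub (n N : ℕ) (R : Submodule ℂ (TP n N)) {a b m : ℕ}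
    (h : a + N + b = m) : Submodule ℂ (TP n m) :=
  ⨅ (p : Fin a → Fin n) (s : Fin b → Fin n), R.comap (sliceMap n N h p s)

/-- The degree-`k` part `∑_{a+N+b=k} V^{⊗a} ⊗ R ⊗ V^{⊗b}` of the two-sided ideal `(R)`. -/
noncomputable def idealSub (n N : ℕ) (R : Submodule ℂ (TP n N)) (k : ℕ) :
    Submodule ℂ (TP n k) :=
  ⨆ (ab : ℕ × ℕ) (h : ab.1 + N + ab.2 = k), midSub n N R h

/-- The degree-`k` homogeneous component `A_k = V^{⊗k} / ∑_{a+N+b=k} V^{⊗a} ⊗ R ⊗ V^{⊗b}`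
of the `N`-homogeneous algebra `A = A(V,R)`. -/
noncomputable abbrev Acomp (n N : ℕ) (R : Submodule ℂ (TP n N)) (k : ℕ) :=
  TP n k ⧸ idealSub n N R k

/-- `W_m = ⋂_{a+N+b=m} V^{⊗a} ⊗ R ⊗ V^{⊗b}` (so `W_m = V^{⊗m}` for `m < N`). -/
noncomputable def Wcomp (n N : ℕ) (R : Submodule ℂ (TP n N)) (m : ℕ) :
    Submodule ℂ (TP n m) :=
  ⨅ (ab : ℕ × ℕ) (h : ab.1 + N + ab.2 = m), midSub n N R h

/-- The jump map `ν_N : ℕ → ℕ`, `ν_N(2i) = Ni`, `ν_N(2i+1) = Ni + 1`. -/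
def nuN (N l : ℕ) : ℕ := N * (l / 2) + l % 2

/-- `KoszulDiff n N R m d` says that `d ℓ` is, for each `ℓ` with `ν_N(ℓ+1) ≤ m`, the
Koszul differential `A_{m-ν_N(ℓ+1)} ⊗ W_{ν_N(ℓ+1)} → A_{m-ν_N(ℓ)} ⊗ W_{ν_N(ℓ)}` of the
total-degree-`m` part `K(A)_m` of the Koszul complex: writing `w ∈ W_{ν_N(ℓ+1)}` as
`∑ᵢ vᵢ ⊗ wᵢ` with `vᵢ ∈ V^{⊗s}`, `wᵢ ∈ W_{ν_N(ℓ)}` (`s = ν_N(ℓ+1) − ν_N(ℓ)`), it sends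
`(class of u) ⊗ w` to `∑ᵢ (class of u·vᵢ) ⊗ wᵢ`. -/
noncomputable def KoszulDiff (n N : ℕ) (R : Submodule ℂ (TP n N)) (m : ℕ)
    (d : ∀ ℓ : ℕ,
      (Acomp n N R (m - nuN N (ℓ+1)) ⊗[ℂ] Wcomp n N R (nuN N (ℓ+1))) →ₗ[ℂ]
      (Acomp n N R (m - nuN N ℓ) ⊗[ℂ] Wcomp n N R (nuN N ℓ))) : Prop :=
  ∀ (ℓ : ℕ), nuN N (ℓ+1) ≤ m →
    ∀ (hs : (nuN N (ℓ+1) - nuN N ℓ) + nuN N ℓ = nuN N (ℓ+1))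
      (hk : (m - nuN N (ℓ+1)) + (nuN N (ℓ+1) - nuN N ℓ) = m - nuN N ℓ)
      (u : TP n (m - nuN N (ℓ+1))) (w : Wcomp n N R (nuN N (ℓ+1)))
      (q : ℕ) (v : Fin q → TP n (nuN N (ℓ+1) - nuN N ℓ))
      (w' : Fin q → Wcomp n N R (nuN N ℓ)),
      (w : TP n (nuN N (ℓ+1))) = ∑ i, mulT hs (v i) (w' i) →
      d ℓ ((idealSub n N R _).mkQ u ⊗ₜ[ℂ] w) =
        ∑ i, (idealSub n N R _).mkQ (mulT hk u (v i)) ⊗ₜ[ℂ] w' i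

/-!
In total degree `m ≥ 1` the terms `A_{m-ν_N(ℓ)} ⊗ W_{ν_N(ℓ)}` with `ν_N(ℓ) ≤ m` form a finite
exact sequence of finite-dimensional spaces, so the alternating sum of their dimensions
vanishes. Since `dim (A_k ⊗ W_j) = dim A_k · dim W_j`, that alternating sum is the coefficient
of `t^m` in the product of the two series. In degree `0` both factors contribute
`dim A_0 = dim W_0 = 1`.
-/

open Finset LinearMap Module

section EulerCharacteristic

variable {K : Type*} [DivisionRing K] {C : ℕ → Type*} [∀ i, AddCommGroup (C i)]
  [∀ i, Module K (C i)] [∀ i, FiniteDimensional K (C i)] (d : ∀ ℓ, C (ℓ + 1) →ₗ[K] C ℓ)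

theorem alternating_sum_finrank_eq_finrank_range {L : ℕ} (h0 : Function.Surjective (d 0))
    (hex : ∀ ℓ < L, ker (d ℓ) = range (d (ℓ + 1))) :
    ∑ ℓ ∈ Finset.range (L + 1), (-1 : ℤ) ^ ℓ * finrank K (C ℓ) =
      (-1) ^ L * finrank K (range (d L)) := by
  induction L with
  | zero =>
    rw [LinearMap.range_eq_top.mpr h0, finrank_top]
    simp
  | succ L ih =>
    have rank_nullity := finrank_range_add_finrank_ker (d L)
    rw [hex L (Nat.lt_add_one L)] at rank_nullity
    have rank_nullity' : (finrank K (range (d L)) : ℤ) + finrank K (range (d (L + 1))) =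
        finrank K (C (L + 1)) := by exact_mod_cast rank_nullity
    rw [sum_range_succ, ih fun ℓ hℓ => hex ℓ (by omega), pow_succ]
    linear_combination (-1 : ℤ) ^ L * rank_nullity'

theorem alternating_sum_finrank_eq_zero {L : ℕ} (h0 : Function.Surjective (d 0))
    (hex : ∀ ℓ < L, ker (d ℓ) = range (d (ℓ + 1))) (htop : ker (d L) = ⊥) :
    ∑ ℓ ∈ Finset.range (L + 2), (-1 : ℤ) ^ ℓ * finrank K (C ℓ) = 0 := by
  rw [sum_range_succ, alternating_sum_finrank_eq_finrank_range d h0 hex,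
    finrank_range_of_inj (ker_eq_bot.mp htop), pow_succ]
  ring

end EulerCharacteristic

theorem exists_forall_le_iff_le {f : ℕ → ℕ} (hf : Monotone f) (hle : ∀ ℓ, ℓ ≤ f ℓ) {m : ℕ}
    (h0 : f 0 ≤ m) : ∃ L, ∀ ℓ, f ℓ ≤ m ↔ ℓ ≤ L := by
  refine ⟨Nat.findGreatest (f · ≤ m) m, fun ℓ => ⟨fun h => ?_, fun h => ?_⟩⟩
  · exact Nat.le_findGreatest ((hle ℓ).trans h) h
  · exact (hf h).trans (Nat.findGreatest_spec (P := (f · ≤ m)) (Nat.zero_le m) h0)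

theorem PowerSeries.coeff_mul_mk_sum_ite {R : Type*} [Semiring R] {ν : ℕ → ℕ}
    (hν : ∀ ℓ, ℓ ≤ ν ℓ) (a : ℕ → R) (c : ℕ → ℕ → R) (m : ℕ) :
    coeff m (mk a * mk fun j => ∑ ℓ ∈ Finset.range (j + 1), if ν ℓ = j then c ℓ j else 0) =
      ∑ ℓ ∈ Finset.range (m + 1) with ν ℓ ≤ m, a (m - ν ℓ) * c ℓ (ν ℓ) := by
  have extend : ∀ j ∈ Finset.range (m + 1),
      ∑ ℓ ∈ Finset.range (j + 1), (if ν ℓ = j then c ℓ j else 0) =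
        ∑ ℓ ∈ Finset.range (m + 1), if ν ℓ = j then c ℓ j else 0 := by
    intro j hj
    refine sum_subset (range_subset_range.mpr (by simpa using hj)) fun ℓ _ hℓ => ?_
    have : ν ℓ ≠ j := fun h => hℓ (mem_range.mpr (by have := hν ℓ; omega))
    simp [this]
  rw [coeff_mul, ← Nat.sum_antidiagonal_swap, Nat.sum_antidiagonal_eq_sum_range_succ_mk]
  simp only [Prod.swap_prod_mk, coeff_mk]
  rw [sum_congr rfl fun j hj => congrArg _ (extend j hj)]
  simp only [mul_sum, mul_ite, mul_zero]
  rw [sum_comm, sum_filter]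
  refine sum_congr rfl fun ℓ _ => ?_
  simp only [sum_ite_eq, mem_range, Nat.lt_succ_iff]

@[simp] theorem nuN_zero (N : ℕ) : nuN N 0 = 0 := by
  simp [nuN]

@[simp] theorem nuN_one (N : ℕ) : nuN N 1 = 1 := by
  simp [nuN]

theorem nuN_two_mul (N i : ℕ) : nuN N (2 * i) = N * i := by
  simp [nuN]

theorem nuN_two_mul_add_one (N i : ℕ) : nuN N (2 * i + 1) = N * i + 1 := by
  simp [nuN, Nat.add_div_of_dvd_right]

theorem nuN_monotone {N : ℕ} (hN : 1 ≤ N) : Monotone (nuN N) := by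
  refine monotone_nat_of_le_succ fun ℓ => ?_
  obtain ⟨i, rfl | rfl⟩ := Nat.even_or_odd' ℓ
  · rw [nuN_two_mul, nuN_two_mul_add_one]; omega
  · rw [nuN_two_mul_add_one, show 2 * i + 1 + 1 = 2 * (i + 1) by ring, nuN_two_mul, mul_add]
    omega

theorem self_le_nuN {N : ℕ} (hN : 2 ≤ N) (ℓ : ℕ) : ℓ ≤ nuN N ℓ := by
  obtain ⟨i, rfl | rfl⟩ := Nat.even_or_odd' ℓ
  · rw [nuN_two_mul]; exact Nat.mul_le_mul_right i hN
  · rw [nuN_two_mul_add_one]; have := Nat.mul_le_mul_right i hN; omega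

theorem finrank_TP (n k : ℕ) : finrank ℂ (TP n k) = n ^ k := by
  simp [TP, finrank_fintype_fun_eq_card]

theorem idealSub_eq_bot_of_lt {n N k : ℕ} (R : Submodule ℂ (TP n N)) (hk : k < N) :
    idealSub n N R k = ⊥ :=
  eq_bot_iff.mpr <| iSup_le fun _ => iSup_le fun h => absurd h (by omega)

theorem Wcomp_eq_top_of_lt {n N m : ℕ} (R : Submodule ℂ (TP n N)) (hm : m < N) :
    Wcomp n N R m = ⊤ :=
  eq_top_iff.mpr <| le_iInf fun _ => le_iInf fun h => absurd h (by omega)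

theorem finrank_Acomp_of_lt {n N k : ℕ} (R : Submodule ℂ (TP n N)) (hk : k < N) :
    finrank ℂ (Acomp n N R k) = n ^ k := by
  rw [(Submodule.quotEquivOfEqBot _ (idealSub_eq_bot_of_lt R hk)).finrank_eq, finrank_TP]

theorem finrank_Wcomp_of_lt {n N m : ℕ} (R : Submodule ℂ (TP n N)) (hm : m < N) :
    finrank ℂ (Wcomp n N R m) = n ^ m := by
  rw [Wcomp_eq_top_of_lt R hm, finrank_top, finrank_TP]

theorem duboisViolette_popov_general (n N : ℕ) (hN : 2 ≤ N) (R : Submodule ℂ (TP n N))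
    (d : ∀ m ℓ : ℕ,
      (Acomp n N R (m - nuN N (ℓ+1)) ⊗[ℂ] Wcomp n N R (nuN N (ℓ+1))) →ₗ[ℂ]
      (Acomp n N R (m - nuN N ℓ) ⊗[ℂ] Wcomp n N R (nuN N ℓ)))
    (hsurj : ∀ m : ℕ, 1 ≤ m → Function.Surjective (d m 0))
    (hexact : ∀ m : ℕ, 1 ≤ m → ∀ ℓ : ℕ, nuN N (ℓ+2) ≤ m →
      LinearMap.ker (d m ℓ) = LinearMap.range (d m (ℓ+1)))
    (htop : ∀ m : ℕ, 1 ≤ m → ∀ ℓ : ℕ, nuN N (ℓ+1) ≤ m → m < nuN N (ℓ+2) →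
      LinearMap.ker (d m ℓ) = ⊥) :
    (PowerSeries.mk fun k => (Module.finrank ℂ (Acomp n N R k) : ℤ)) *
      (PowerSeries.mk fun j => ∑ ℓ ∈ Finset.range (j + 1),
        if nuN N ℓ = j then (-1 : ℤ) ^ ℓ * (Module.finrank ℂ (Wcomp n N R j) : ℤ)
        else 0) = 1 := by
  ext m
  rw [PowerSeries.coeff_mul_mk_sum_ite (self_le_nuN hN), PowerSeries.coeff_one]
  rcases Nat.eq_zero_or_pos m with rfl | hm
  · simp [filter_singleton, finrank_Acomp_of_lt R (k := 0 - nuN N 0) (by simp; omega),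
      finrank_Wcomp_of_lt R (m := nuN N 0) (by simp; omega)]
  obtain ⟨L, hL⟩ := exists_forall_le_iff_le (nuN_monotone (by omega)) (self_le_nuN hN)
    (by simp : nuN N 0 ≤ m)
  -- `L + 1` is the top position of `K(A)_m`, the largest `ℓ` with `ν_N(ℓ) ≤ m`.
  obtain ⟨L, rfl⟩ := Nat.exists_eq_add_one.mpr ((hL 1).mp (by rw [nuN_one]; exact hm))
  have hLm : L + 1 ≤ m := (self_le_nuN hN _).trans ((hL _).mpr le_rfl)
  have filter_eq_range : {ℓ ∈ Finset.range (m + 1) | nuN N ℓ ≤ m} = Finset.range (L + 2) := by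
    ext ℓ
    simp only [mem_filter, Finset.mem_range, hL]
    omega
  have euler := alternating_sum_finrank_eq_zero
    (C := fun ℓ => Acomp n N R (m - nuN N ℓ) ⊗[ℂ] Wcomp n N R (nuN N ℓ)) (d m) (hsurj m hm)
    (fun ℓ hℓ => hexact m hm ℓ ((hL _).mpr (by omega)))
    (htop m hm L ((hL _).mpr le_rfl) (lt_of_not_ge fun h => by have := (hL _).mp h; omega))
  rw [if_neg hm.ne', filter_eq_range, ← euler]
  refine sum_congr rfl fun ℓ _ => ?_
  rw [finrank_tensorProduct]
  push_cast
  ring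

/-- **Dubois-Violette–Popov numerical Hilbert series identity.**
Let `V = ℂ^n`, `N ≥ 2`, `R ⊆ V^{⊗N}`, and suppose that for every `m ≥ 1` the
total-degree-`m` part `K(A)_m` of the Koszul complex of `A = A(V,R)` is exact at every
position (surjectivity of `d 0 : A_{m-1} ⊗ W_1 → A_m ⊗ W_0` at position `0`, exactness
`ker = range` at the interior positions, and injectivity at the top position, i.e. at
the largest `ℓ` with `ν_N(ℓ) ≤ m`, where the incoming term of `K(A)_m` vanishes).  Then
`(∑_{k≥0} dim A_k tᵏ) · (∑_{ℓ≥0} (-1)^ℓ dim W_{ν_N(ℓ)} t^{ν_N(ℓ)}) = 1` in `ℤ[[t]]`. -/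
theorem duboisViolette_popov (n N : ℕ) (hN : 2 ≤ N) (R : Submodule ℂ (TP n N))
    (d : ∀ m ℓ : ℕ,
      (Acomp n N R (m - nuN N (ℓ+1)) ⊗[ℂ] Wcomp n N R (nuN N (ℓ+1))) →ₗ[ℂ]
      (Acomp n N R (m - nuN N ℓ) ⊗[ℂ] Wcomp n N R (nuN N ℓ)))
    (hd : ∀ m : ℕ, KoszulDiff n N R m (d m))
    (hsurj : ∀ m : ℕ, 1 ≤ m → Function.Surjective (d m 0))
    (hexact : ∀ m : ℕ, 1 ≤ m → ∀ ℓ : ℕ, nuN N (ℓ+2) ≤ m →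
      LinearMap.ker (d m ℓ) = LinearMap.range (d m (ℓ+1)))
    (htop : ∀ m : ℕ, 1 ≤ m → ∀ ℓ : ℕ, nuN N (ℓ+1) ≤ m → m < nuN N (ℓ+2) →
      LinearMap.ker (d m ℓ) = ⊥) :
    (PowerSeries.mk fun k => (Module.finrank ℂ (Acomp n N R k) : ℤ)) *
      (PowerSeries.mk fun j => ∑ ℓ ∈ Finset.range (j + 1),
        if nuN N ℓ = j then (-1 : ℤ) ^ ℓ * (Module.finrank ℂ (Wcomp n N R j) : ℤ)
        else 0) = 1 :=
  duboisViolette_popov_general n N hN R d hsurj hexact htop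
end

section
/- Let 2 ≤ N ≤ n be integers. Then the identity (∑_{k≥0} L(n,N,k) t^k) · (∑_{ℓ≥0} (-1)^ℓ C(n, ν_N(ℓ)) t^{ν_N(ℓ)}) = 1 holds in the formal power series ring ℤ[[t]], with the convention C(n,j) = 0 for j > n. Equivalently, ∑_{k≥0} L(n,N,k) t^k = (1 − n t + C(n,N) t^N − C(n,N+1) t^{N+1} + C(n,2N) t^{2N} − C(n,2N+1) t^{2N+1} + ⋯)^{-1}. -/
/-- A word with letters in `{1,…,n}` (modeled as `Fin n`) is admissible if it contains
no `N`-descent, i.e. no contiguous strictly decreasing subword of length `N`. -/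
def Admissible (n N : ℕ) (l : List (Fin n)) : Prop :=
  ¬ ∃ w : List (Fin n), w.length = N ∧ w.Chain' (· > ·) ∧ w <:+: l

/-- `L n N k` is the number of admissible words of length `k` with letters in `{1,…,n}`. -/
noncomputable def Lword (n N k : ℕ) : ℕ :=
  Nat.card {l : List (Fin n) // l.length = k ∧ Admissible n N l}

open Finset PowerSeries

namespace Antisymmetrizer

theorem le_nuN {N : ℕ} (hN : 2 ≤ N) (ℓ : ℕ) : ℓ ≤ nuN N ℓ := by
  have := Nat.mul_le_mul_right (ℓ / 2) hN
  rw [nuN]; omega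

theorem telescope_nuN {N : ℕ} {x s : ℕ → ℤ} (h : ∀ j, x j = s j - s (j + 1) + x (j + N))
    (K : ℕ) : x 0 = ∑ ℓ ∈ range (2 * K), (-1) ^ ℓ * s (nuN N ℓ) + x (N * K) := by
  induction K with
  | zero => simp
  | succ K ih =>
    have h₀ : nuN N (2 * K) = N * K := by simp [nuN]
    have h₁ : nuN N (2 * K + 1) = N * K + 1 := by simp [nuN, Nat.add_div]
    rw [ih, h (N * K), Nat.mul_succ, Nat.mul_succ, sum_range_succ, sum_range_succ, h₀, h₁,
      pow_succ, pow_mul]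
    ring

theorem coeff_mul_mk_sum_ite {R : Type*} [Semiring R] (a : ℕ → R) (b : ℕ → ℕ → R)
    {f : ℕ → ℕ} (hf : ∀ ℓ, ℓ ≤ f ℓ) (m : ℕ) :
    coeff m (mk a * mk fun j => ∑ ℓ ∈ range (j + 1), if f ℓ = j then b ℓ j else 0) =
      ∑ ℓ ∈ range (m + 1), if f ℓ ≤ m then a (m - f ℓ) * b ℓ (f ℓ) else 0 := by
  rw [coeff_mul, ← Nat.sum_antidiagonal_swap, Nat.sum_antidiagonal_eq_sum_range_succ_mk]
  simp only [Prod.fst_swap, Prod.snd_swap, coeff_mk]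
  have hext : ∀ k ∈ range (m + 1),
      (∑ ℓ ∈ range (k + 1), if f ℓ = k then b ℓ k else 0) =
        ∑ ℓ ∈ range (m + 1), if f ℓ = k then b ℓ k else 0 := fun k hk =>
    sum_subset (range_subset_range.2 (by rw [mem_range] at hk; omega)) fun ℓ _ hℓ =>
      if_neg fun h => hℓ (mem_range.2 (by have := hf ℓ; omega))
  rw [sum_congr rfl fun k hk => by rw [hext k hk, mul_sum], sum_comm]
  refine sum_congr rfl fun ℓ _ => ?_
  simp only [mul_ite, mul_zero, sum_ite_eq, mem_range, Nat.lt_succ_iff]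

section Runs

variable {α : Type*} [LT α]

def Descent (l : List α) (t : ℕ) : Prop := ∃ h : t + 1 < l.length, l[t + 1] < l[t]

-- The letters at positions `k, …, k + len - 1` strictly decrease.
def DecreasingRun (l : List α) (k len : ℕ) : Prop :=
  ∀ t, k ≤ t → t + 1 < k + len → Descent l t

def AdmissibleFrom (N : ℕ) (l : List α) (p : ℕ) : Prop :=
  ∀ k, p ≤ k → k + N ≤ l.length → ¬ DecreasingRun l k N

variable {l : List α}

theorem Descent.lt_length {t : ℕ} (h : Descent l t) : t + 1 < l.length := h.1

theorem descent_drop {p t : ℕ} : Descent (l.drop p) t ↔ Descent l (p + t) := by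
  simp only [Descent, List.length_drop, List.getElem_drop]
  constructor
  · rintro ⟨h, hlt⟩; exact ⟨by omega, by simpa [Nat.add_assoc] using hlt⟩
  · rintro ⟨h, hlt⟩; exact ⟨by omega, by simpa [Nat.add_assoc] using hlt⟩

theorem descent_take {j t : ℕ} : Descent (l.take j) t ↔ t + 1 < j ∧ Descent l t := by
  simp only [Descent, List.length_take, List.getElem_take]
  constructor
  · rintro ⟨h, hlt⟩; exact ⟨by omega, by omega, hlt⟩
  · rintro ⟨hj, h, hlt⟩; exact ⟨by omega, hlt⟩

theorem isChain_gt_iff_decreasingRun : l.IsChain (· > ·) ↔ DecreasingRun l 0 l.length := by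
  rw [List.isChain_iff_getElem]
  exact ⟨fun h t _ ht => ⟨by omega, h t (by omega)⟩,
    fun h t ht => (h t t.zero_le (by omega)).2⟩

theorem DecreasingRun.mono {k len k' len' : ℕ} (h : DecreasingRun l k len) (hk : k ≤ k')
    (hlen : k' + len' ≤ k + len) : DecreasingRun l k' len' :=
  fun t hkt ht => h t (hk.trans hkt) (by omega)

theorem DecreasingRun.append {k a b : ℕ} (h₁ : DecreasingRun l k (a + 1))
    (h₂ : DecreasingRun l (k + a) (b + 1)) : DecreasingRun l k (a + b + 1) := fun t hkt ht =>
  if hta : t < k + a then h₁ t hkt (by omega) else h₂ t (by omega) (by omega)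

theorem decreasingRun_take_iff {j : ℕ} (hj : j ≤ l.length) :
    (l.take j).IsChain (· > ·) ↔ DecreasingRun l 0 j := by
  rw [isChain_gt_iff_decreasingRun, List.length_take, min_eq_left hj]
  simp only [DecreasingRun, descent_take]
  exact forall_congr' fun t =>
    ⟨fun h h0 ht => (h h0 ht).2, fun h h0 ht => ⟨by omega, h h0 ht⟩⟩

theorem decreasingRun_of_le_one {k len : ℕ} (h : len ≤ 1) : DecreasingRun l k len :=
  fun _ _ _ => by omega

theorem decreasingRun_drop {p k len : ℕ} :
    DecreasingRun (l.drop p) k len ↔ DecreasingRun l (p + k) len := by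
  simp only [DecreasingRun, descent_drop]
  refine ⟨fun h t hkt ht => ?_, fun h t hkt ht => h (p + t) (by omega) (by omega)⟩
  simpa [Nat.add_sub_cancel' (by omega : p ≤ t)] using h (t - p) (by omega) (by omega)

theorem isChain_gt_take_drop_iff {k len : ℕ} (h : k + len ≤ l.length) :
    ((l.drop k).take len).IsChain (· > ·) ↔ DecreasingRun l k len := by
  rw [decreasingRun_take_iff (by simp only [List.length_drop]; omega), decreasingRun_drop,
    Nat.add_zero]

end Runs

theorem admissible_iff {n N : ℕ} {l : List (Fin n)} :
    Admissible n N l ↔ AdmissibleFrom N l 0 := by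
  refine ⟨fun h k _ hk hrun => h ⟨(l.drop k).take N,
    by simp only [List.length_take, List.length_drop]; omega, (isChain_gt_take_drop_iff hk).2 hrun,
    (List.take_prefix N _).isInfix.trans (List.drop_suffix k l).isInfix⟩, ?_⟩
  rintro h ⟨w, rfl, hw, hinf⟩
  obtain ⟨t, hwt, htl⟩ := List.infix_iff_prefix_suffix.1 hinf
  have hlen := htl.length_le
  have hwlen := hwt.length_le
  rw [List.prefix_iff_eq_take.1 hwt, List.suffix_iff_eq_drop.1 htl] at hw
  exact h _ (Nat.zero_le _) (by omega) ((isChain_gt_take_drop_iff (by omega)).1 hw)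

theorem admissible_drop_iff {n N p : ℕ} {l : List (Fin n)} (hp : p ≤ l.length) :
    Admissible n N (l.drop p) ↔ AdmissibleFrom N l p := by
  simp only [admissible_iff, AdmissibleFrom, List.length_drop, decreasingRun_drop]
  refine ⟨fun h k hk hkN => ?_, fun h k _ hkN => h (p + k) (by omega) (by omega)⟩
  simpa [Nat.add_sub_cancel' hk] using h (k - p) (Nat.zero_le _) (by omega)

section Splits

variable {α : Type*} [LT α] (N : ℕ)

-- `v = u ++ w` with `u` strictly decreasing of length `j` and `w` admissible.
def SplitsAt (j : ℕ) (v : List α) : Prop :=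
  j ≤ v.length ∧ DecreasingRun v 0 j ∧ AdmissibleFrom N v j

-- `v = u ++ w` with `u` strictly decreasing of length `j + 1` and `(last u) :: w` admissible.
def SplitsAtExtending (j : ℕ) (v : List α) : Prop :=
  j + 1 ≤ v.length ∧ DecreasingRun v 0 (j + 1) ∧ AdmissibleFrom N v j

-- A split at `j` in which `u` is the longest strictly decreasing prefix of `v`.
def SplitsMaximallyAt (j : ℕ) (v : List α) : Prop :=
  SplitsAt N j v ∧ ¬ SplitsAtExtending N j v

variable {N} {l v : List α} {j p q : ℕ}

theorem AdmissibleFrom.mono (h : AdmissibleFrom N l p) (hpq : p ≤ q) : AdmissibleFrom N l q :=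
  fun k hk => h k (hpq.trans hk)

theorem admissibleFrom_iff_succ :
    AdmissibleFrom N l p ↔
      AdmissibleFrom N l (p + 1) ∧ ¬ (p + N ≤ l.length ∧ DecreasingRun l p N) := by
  refine ⟨fun h => ⟨h.mono p.le_succ, fun ⟨hp, hrun⟩ => h p le_rfl hp hrun⟩, ?_⟩
  rintro ⟨h, hp⟩ k hk hkN hrun
  rcases hk.eq_or_lt with rfl | hk
  · exact hp ⟨hkN, hrun⟩
  · exact h k hk hkN hrun

theorem SplitsAtExtending.splitsAt (h : SplitsAtExtending N j v) : SplitsAt N j v :=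
  ⟨by have := h.1; omega, h.2.1.mono le_rfl (by omega), h.2.2⟩

theorem SplitsAtExtending.splitsAt_succ (h : SplitsAtExtending N j v) : SplitsAt N (j + 1) v :=
  ⟨h.1, h.2.1, h.2.2.mono j.le_succ⟩

theorem splitsAt_succ_and_not_extending_iff (hN : 0 < N) :
    SplitsAt N (j + 1) v ∧ ¬ SplitsAtExtending N j v ↔ SplitsMaximallyAt N (j + N) v := by
  obtain ⟨M, rfl⟩ : ∃ M, N = M + 1 := ⟨N - 1, by omega⟩
  constructor
  · rintro ⟨⟨hj, hrun, haf⟩, hext⟩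
    have hafj : ¬ AdmissibleFrom (M + 1) v j := fun hafj => hext ⟨by omega, hrun, hafj⟩
    obtain ⟨hlen, hrunj⟩ : j + (M + 1) ≤ v.length ∧ DecreasingRun v j (M + 1) := by
      by_contra hrunj
      exact hafj (admissibleFrom_iff_succ.2 ⟨haf, hrunj⟩)
    refine ⟨⟨hlen, ?_, haf.mono (by omega)⟩, fun ⟨hlen', hrun', _⟩ => ?_⟩
    · simpa [Nat.add_assoc] using hrun.append (by simpa using hrunj)
    · exact haf (j + 1) le_rfl (by omega) (hrun'.mono (Nat.zero_le _) (by omega))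
  · rintro ⟨⟨hlen, hrun, haf⟩, hext⟩
    refine ⟨⟨by omega, hrun.mono le_rfl (by omega), fun k hk hkN hrunk => ?_⟩,
      fun ⟨_, _, hafj⟩ => hafj j le_rfl hlen (hrun.mono (Nat.zero_le _) (by omega))⟩
    by_cases hkj : j + (M + 1) ≤ k
    · exact haf k hkj hkN hrunk
    -- an `N`-descent starting strictly between `j` and `j + N` prolongs the decreasing prefix
    have hdesc : Descent v (j + M) := hrunk _ (by omega) (by omega)
    refine hext ⟨by have := hdesc.lt_length; omega, fun t _ ht => ?_, haf⟩
    rcases Nat.lt_or_ge t (j + M) with htj | htj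
    · exact hrun t (Nat.zero_le _) (by omega)
    · obtain rfl : t = j + M := by omega
      exact hdesc

theorem splitsMaximallyAt_zero_iff (hN : 0 < N) : SplitsMaximallyAt N 0 v ↔ v = [] := by
  constructor
  · rintro ⟨⟨-, -, haf⟩, hext⟩
    by_contra hv
    exact hext ⟨List.length_pos_iff.2 hv, decreasingRun_of_le_one le_rfl, haf⟩
  · rintro rfl
    refine ⟨⟨le_rfl, decreasingRun_of_le_one (Nat.zero_le 1), fun k _ hk => ?_⟩,
      fun h => by simpa using h.1⟩
    rw [List.length_nil] at hk
    omega

end Splits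

theorem splitsAt_iff_take_drop {n N j : ℕ} {v : List (Fin n)} (hj : j ≤ v.length) :
    SplitsAt N j v ↔ (v.take j).IsChain (· > ·) ∧ Admissible n N (v.drop j) := by
  rw [SplitsAt, decreasingRun_take_iff hj, admissible_drop_iff hj, and_iff_right hj]

theorem card_filter_eq_add_of_imp {β : Type*} {s : Finset β} {p q r : β → Prop}
    [DecidablePred p] [DecidablePred q] [DecidablePred r] (hqp : ∀ x, q x → p x)
    (hr : ∀ x, p x ∧ ¬ q x ↔ r x) :
    #(s.filter p) = #(s.filter q) + #(s.filter r) := by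
  rw [← card_filter_add_card_filter_not (s := s.filter p) q, filter_filter, filter_filter]
  congr 2
  · exact filter_congr fun x _ => ⟨And.right, fun h => ⟨hqp x h, h⟩⟩
  · exact filter_congr fun x _ => hr x

section Counting

open scoped Classical

def words (n m : ℕ) : Finset (List (Fin n)) :=
  (univ : Finset (List.Vector (Fin n) m)).map ⟨List.Vector.toList, List.Vector.toList_injective⟩

@[simp]
theorem mem_words {n m : ℕ} {l : List (Fin n)} : l ∈ words n m ↔ l.length = m := by
  simp only [words, mem_map, mem_univ, true_and, Function.Embedding.coeFn_mk]
  exact ⟨by rintro ⟨v, rfl⟩; exact v.2, fun h => ⟨⟨l, h⟩, rfl⟩⟩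

theorem lword_eq_card (n N k : ℕ) : Lword n N k = #((words n k).filter (Admissible n N)) := by
  rw [Lword, ← Nat.card_eq_finsetCard]
  exact Nat.card_congr (Equiv.subtypeEquivRight fun l => by simp)

theorem card_filter_isChain_gt (n j : ℕ) :
    #((words n j).filter (List.IsChain (· > ·))) = n.choose j := by
  have hcard := card_powersetCard j (univ : Finset (Fin n))
  rw [card_univ, Fintype.card_fin] at hcard
  rw [← hcard]
  refine card_nbij' List.toFinset (fun s => s.sort (· ≥ ·)) (fun l hl => ?_) (fun s hs => ?_)
    (fun l hl => ?_) (fun s _ => sort_toFinset _ _)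
  · simp only [coe_filter, mem_words, Set.mem_ofPred_eq] at hl
    simp [List.toFinset_card_of_nodup (List.IsChain.sortedGT hl.2).nodup, hl.1]
  · simp only [mem_coe, mem_powersetCard] at hs
    simpa [hs.2] using (sortedGT_sort s).isChain
  · simp only [coe_filter, mem_words, Set.mem_ofPred_eq] at hl
    exact (sortedGT_sort _).eq_of_mem_iff (List.IsChain.sortedGT hl.2) (by simp)

theorem card_filter_splitsAt (n N m j : ℕ) :
    #((words n m).filter (SplitsAt N j)) =
      if j ≤ m then n.choose j * Lword n N (m - j) else 0 := by
  split_ifs with hj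
  · rw [← card_filter_isChain_gt, lword_eq_card, ← card_product]
    refine card_nbij' (fun v => (v.take j, v.drop j)) (fun p => p.1 ++ p.2) (fun v hv => ?_)
      (fun p hp => ?_) (fun v _ => List.take_append_drop j v) (fun p hp => ?_)
    · simp only [coe_filter, mem_words, Set.mem_ofPred_eq] at hv
      rw [splitsAt_iff_take_drop (by omega)] at hv
      simp [hv, hj]
    · simp only [coe_product, coe_filter, mem_words, Set.mem_prod, Set.mem_ofPred_eq] at hp
      simp only [coe_filter, mem_words, Set.mem_ofPred_eq, List.length_append]
      rw [splitsAt_iff_take_drop (by simp only [List.length_append]; omega),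
        List.take_left' hp.1.1, List.drop_left' hp.1.1]
      exact ⟨by omega, hp.1.2, hp.2.2⟩
    · simp only [coe_product, coe_filter, mem_words, Set.mem_prod, Set.mem_ofPred_eq] at hp
      simp [List.take_left' hp.1.1, List.drop_left' hp.1.1]
  · exact card_eq_zero.2 <| filter_eq_empty_iff.2 fun v hv h => hj (mem_words.1 hv ▸ h.1)

theorem card_filter_splitsMaximallyAt_zero {N : ℕ} (hN : 0 < N) (n m : ℕ) :
    #((words n m).filter (SplitsMaximallyAt N 0)) = if m = 0 then 1 else 0 := by
  rw [filter_congr fun v _ => splitsMaximallyAt_zero_iff hN]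
  split_ifs with hm
  · subst hm
    exact card_eq_one.2 ⟨[], by ext v; simp [List.length_eq_zero_iff]⟩
  · exact card_eq_zero.2 <| filter_eq_empty_iff.2 fun v hv h => hm (by simp_all [eq_comm])

theorem card_filter_splitsMaximallyAt_of_lt {n N m j : ℕ} (h : m < j) :
    #((words n m).filter (SplitsMaximallyAt N j)) = 0 :=
  card_eq_zero.2 <| filter_eq_empty_iff.2 fun v hv hs => by
    have := hs.1.1; rw [mem_words.1 hv] at this; omega

theorem card_filter_splitsMaximallyAt_eq {N : ℕ} (hN : 0 < N) (n m j : ℕ) :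
    (#((words n m).filter (SplitsMaximallyAt N j)) : ℤ) =
      #((words n m).filter (SplitsAt N j)) - #((words n m).filter (SplitsAt N (j + 1))) +
        #((words n m).filter (SplitsMaximallyAt N (j + N))) := by
  have h₁ := card_filter_eq_add_of_imp (s := words n m) (p := SplitsAt N j)
    (q := SplitsAtExtending N j) (r := SplitsMaximallyAt N j)
    (fun _ => SplitsAtExtending.splitsAt) fun _ => Iff.rfl
  have h₂ := card_filter_eq_add_of_imp (s := words n m) (p := SplitsAt N (j + 1))
    (q := SplitsAtExtending N j) (r := SplitsMaximallyAt N (j + N))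
    (fun _ => SplitsAtExtending.splitsAt_succ) fun _ => splitsAt_succ_and_not_extending_iff hN
  omega

theorem sum_alternating_card_filter_splitsAt {N : ℕ} (hN : 0 < N) (n m : ℕ) :
    ∑ ℓ ∈ range (2 * (m + 1)),
        (-1) ^ ℓ * (#((words n m).filter (SplitsAt N (nuN N ℓ))) : ℤ) =
      if m = 0 then 1 else 0 := by
  have h := telescope_nuN (card_filter_splitsMaximallyAt_eq hN n m) (m + 1)
  have hlt : m < N * (m + 1) := m.lt_succ_self.trans_le (Nat.le_mul_of_pos_left _ hN)
  rw [card_filter_splitsMaximallyAt_zero hN, card_filter_splitsMaximallyAt_of_lt hlt] at h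
  split_ifs at h ⊢ <;> simpa using h.symm

end Counting

end Antisymmetrizer

theorem antisymmetrizer_hilbert_series_identity_general (n N : ℕ) (h2 : 2 ≤ N) :
    (PowerSeries.mk fun k => (Lword n N k : ℤ)) *
      (PowerSeries.mk fun j => ∑ ℓ ∈ Finset.range (j + 1),
        if nuN N ℓ = j then (-1 : ℤ) ^ ℓ * (Nat.choose n j : ℤ) else 0) = 1 := by
  ext m
  rw [Antisymmetrizer.coeff_mul_mk_sum_ite _ (fun ℓ j => (-1) ^ ℓ * (n.choose j : ℤ))
      (Antisymmetrizer.le_nuN h2), coeff_one,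
    ← Antisymmetrizer.sum_alternating_card_filter_splitsAt (by omega : 0 < N) n m]
  refine sum_subset_zero_on_sdiff (range_subset_range.2 (by omega)) (fun ℓ hℓ => ?_)
    fun ℓ _ => ?_
  · have := Antisymmetrizer.le_nuN h2 ℓ
    simp only [mem_sdiff, mem_range] at hℓ
    rw [Antisymmetrizer.card_filter_splitsAt, if_neg (by omega), Nat.cast_zero, mul_zero]
  · rw [Antisymmetrizer.card_filter_splitsAt]
    split_ifs <;> push_cast <;> ring

/-- **Numerical Hilbert series identity for the `N`-antisymmetrizer algebra.**
`(∑_{k≥0} L(n,N,k) tᵏ) · (∑_{ℓ≥0} (-1)^ℓ C(n, ν_N(ℓ)) t^{ν_N(ℓ)}) = 1` in `ℤ[[t]]`. -/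
theorem antisymmetrizer_hilbert_series_identity (n N : ℕ) (h2 : 2 ≤ N) (hn : N ≤ n) :
    (PowerSeries.mk fun k => (Lword n N k : ℤ)) *
      (PowerSeries.mk fun j => ∑ ℓ ∈ Finset.range (j + 1),
        if nuN N ℓ = j then (-1 : ℤ) ^ ℓ * (Nat.choose n j : ℤ) else 0) = 1 :=
  antisymmetrizer_hilbert_series_identity_general n N h2
end
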